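/- Let S = s₁ ∨ … ∨ s_k and M = m₁ ∨ … ∨ m_n be clauses. Then S and M are respectively the side and main premise of an instance of subsumption resolution (i.e., there exist a substitution σ, a nonempty subset S' ⊆ S, and a literal m' ∈ M with σ(S') = {¬m'} and σ(S \ S') ⊆ M \ {m'}) if and only if there exists a substitution σ satisfying: (existence) ∃ i j, σ(sᵢ) = ¬mⱼ; (uniqueness) ∃ j', ∀ i j, σ(sᵢ) = ¬mⱼ → j = j'; (completeness) ∀ i, ∃ j, σ(sᵢ) = ¬mⱼ ∨ σ(sᵢ) = mⱼ; (coherence) ∀ j, (∃ i, σ(sᵢ) = mⱼ) → ∀ i, σ(sᵢ) ≠ ¬mⱼ. -/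
import Mathlib


/-- First-order terms over variables `V`. -/
inductive Trm (V : Type) : Type
  | var : V → Trm V
  | fn : ℕ → Trm V
  | app : Trm V → Trm V → Trm V
deriving DecidableEq

/-- Applying a (total) substitution to a term. -/
def Trm.subst {V : Type} (σ : V → Trm V) : Trm V → Trm V
  | .var x => σ x
  | .fn f => .fn f
  | .app t u => .app (t.subst σ) (u.subst σ)

/-- A first-order literal: a polarity, a predicate symbol and an argument term. -/
structure Lit (V : Type) where
  pos : Bool
  pred : ℕ
  arg : Trm V
deriving DecidableEq

/-- The complement of a literal. -/
def Lit.neg {V : Type} (l : Lit V) : Lit V := { l with pos := !l.pos }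

/-- Applying a substitution to a literal. -/
def Lit.subst {V : Type} (σ : V → Trm V) (l : Lit V) : Lit V :=
  { l with arg := l.arg.subst σ }

/-- A clause is a multiset of literals. -/
abbrev Clause (V : Type) := Multiset (Lit V)

/-- Applying a substitution to a clause. -/
def Clause.subst {V : Type} (σ : V → Trm V) (C : Clause V) : Clause V :=
  C.map (Lit.subst σ)

/-- `S` subsumes `M`: some substitution maps `S` to a sub-multiset of `M`. -/
def Subsumes {V : Type} (S M : Clause V) : Prop :=
  ∃ σ : V → Trm V, Clause.subst σ S ≤ M

/-- `S` and `M` are side and main premises of subsumption resolution: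
there are `σ`, a nonempty `S' ⊆ S` and `m' ∈ M` with `σ(S') = {¬m'}` and
`σ(S \ S') ⊆ M \ {m'}`. -/
def SubRes {V : Type} [DecidableEq V] (S M : Clause V) : Prop :=
  ∃ (σ : V → Trm V) (S' : Clause V) (m' : Lit V),
    S' ≤ S ∧ S' ≠ 0 ∧ m' ∈ M ∧
    (∀ l ∈ S', Lit.subst σ l = m'.neg) ∧
    (∀ l ∈ S - S', Lit.subst σ l ∈ M.erase m')

/-- Partial substitutions. -/
abbrev PSub (V : Type) := V → Option (Trm V)

/-- Partial application of a partial substitution to a term. -/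
def Trm.psubst {V : Type} (θ : PSub V) : Trm V → Option (Trm V)
  | .var x => θ x
  | .fn f => some (.fn f)
  | .app t u => (t.psubst θ).bind fun t' => (u.psubst θ).map fun u' => .app t' u'

/-- Partial application of a partial substitution to a literal. -/
def Lit.psubst {V : Type} (θ : PSub V) (l : Lit V) : Option (Lit V) :=
  (l.arg.psubst θ).map fun t => { l with arg := t }

/-- `θ ⊆ σ`: the total substitution `σ` extends the partial substitution `θ`. -/
def PSub.le {V : Type} (θ : PSub V) (σ : V → Trm V) : Prop :=
  ∀ x t, θ x = some t → σ x = t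

/-- The clause with literals `s 0, …, s (k-1)`. -/
def clauseOfFn {V : Type} {k : ℕ} (s : Fin k → Lit V) : Clause V :=
  (List.ofFn s : List (Lit V))

/-- The indexed clause `m` has no duplicate literals. -/
def NoDupIdx {V : Type} {n : ℕ} (m : Fin n → Lit V) : Prop :=
  ∀ j j' : Fin n, m j = m j' → j = j'

/-- The indexed clause `m` has no duplicate atoms: no two (distinct) literals are
equal or complementary. -/
def NoDupAtomsIdx {V : Type} {n : ℕ} (m : Fin n → Lit V) : Prop :=
  (∀ j j' : Fin n, m j = m j' → j = j') ∧ (∀ j j' : Fin n, m j ≠ (m j').neg)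

/-- `Sp` is the family of positive matchers `Σ⁺ᵢⱼ`: `Sp i j = some θ` exactly when a
substitution matching `sᵢ` to `mⱼ` exists, in which case `θ` is such a (partial)
matcher and every total match is an extension of it. -/
def IsMatcherFamilyPos {V : Type} {k n : ℕ} (s : Fin k → Lit V) (m : Fin n → Lit V)
    (Sp : Fin k → Fin n → Option (PSub V)) : Prop :=
  (∀ i j θ, Sp i j = some θ → Lit.psubst θ (s i) = some (m j)) ∧
  (∀ i j (σ : V → Trm V), Lit.subst σ (s i) = m j → ∃ θ, Sp i j = some θ ∧ PSub.le θ σ)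

/-- `Sn` is the family of negative matchers `Σ⁻ᵢⱼ` (matching `sᵢ` to `¬mⱼ`). -/
def IsMatcherFamilyNeg {V : Type} {k n : ℕ} (s : Fin k → Lit V) (m : Fin n → Lit V)
    (Sn : Fin k → Fin n → Option (PSub V)) : Prop :=
  (∀ i j θ, Sn i j = some θ → Lit.psubst θ (s i) = some ((m j).neg)) ∧
  (∀ i j (σ : V → Trm V), Lit.subst σ (s i) = (m j).neg → ∃ θ, Sn i j = some θ ∧ PSub.le θ σ)

/-- The (predicate, polarity) header of a literal. -/
def Lit.header {V : Type} (l : Lit V) : ℕ × Bool := (l.pred, l.pos)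


lemma mem_clauseOfFn {V : Type} {k : ℕ} {s : Fin k → Lit V} {l : Lit V} :
    l ∈ clauseOfFn s ↔ ∃ i, s i = l := by
  simp [clauseOfFn, List.mem_ofFn, eq_comm]

lemma Lit.neg_inj {V : Type} {l l' : Lit V} (h : l.neg = l'.neg) : l = l' := by
  cases l; cases l'; simp_all [Lit.neg]

lemma Lit.neg_ne_self {V : Type} (l : Lit V) : l.neg ≠ l := by
  cases l; simp [Lit.neg]

/-- Subsumption resolution constraints: `S`, `M` are side/main premises of `SR` iff
some substitution satisfies existence, uniqueness, completeness and coherence. -/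
theorem stmt1 {V : Type} [DecidableEq V] {k n : ℕ} (s : Fin k → Lit V) (m : Fin n → Lit V)
    (hM : NoDupAtomsIdx m) :
    SubRes (clauseOfFn s) (clauseOfFn m) ↔
      ∃ σ : V → Trm V,
        (∃ i j, Lit.subst σ (s i) = (m j).neg) ∧
        (∃ j' : Fin n, ∀ i j, Lit.subst σ (s i) = (m j).neg → j = j') ∧
        (∀ i, ∃ j, Lit.subst σ (s i) = (m j).neg ∨ Lit.subst σ (s i) = m j) ∧
        (∀ j, (∃ i, Lit.subst σ (s i) = m j) → ∀ i, Lit.subst σ (s i) ≠ (m j).neg) := by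
  constructor
  · rintro ⟨σ, S', m', hS'le, hS'ne, hm'M, hneg, hrest⟩
    obtain ⟨j', hj'⟩ := mem_clauseOfFn.mp hm'M
    have hsplit : ∀ i : Fin k, s i ∈ S' ∨ s i ∈ clauseOfFn s - S' := by
      intro i
      have hmem : s i ∈ clauseOfFn s := mem_clauseOfFn.mpr ⟨i, rfl⟩
      have := tsub_add_cancel_of_le hS'le
      rw [← this, Multiset.mem_add] at hmem
      tauto
    have huniq : ∀ i j, Lit.subst σ (s i) = (m j).neg → j = j' := by
      intro i j hij
      rcases hsplit i with h | h
      · have := hneg _ h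
        rw [hij, ← hj'] at this
        exact hM.1 _ _ (Lit.neg_inj this)
      · have hin := hrest _ h
        have : Lit.subst σ (s i) ∈ clauseOfFn m :=
          Multiset.mem_of_mem_erase hin
        obtain ⟨j2, hj2⟩ := mem_clauseOfFn.mp this
        rw [hij] at hj2
        exact absurd hj2 (hM.2 j2 j)
    refine ⟨σ, ?_, ⟨j', huniq⟩, ?_, ?_⟩
    · obtain ⟨l, hl⟩ := Multiset.exists_mem_of_ne_zero hS'ne
      obtain ⟨i, hi⟩ := mem_clauseOfFn.mp (Multiset.mem_of_le hS'le hl)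
      exact ⟨i, j', by rw [hi]; rw [hneg _ hl, hj']⟩
    · intro i
      rcases hsplit i with h | h
      · exact ⟨j', Or.inl (by rw [hneg _ h, hj'])⟩
      · have hin := hrest _ h
        obtain ⟨j2, hj2⟩ := mem_clauseOfFn.mp (Multiset.mem_of_mem_erase hin)
        exact ⟨j2, Or.inr hj2.symm⟩
    · rintro j ⟨i, hi⟩ i2 hi2
      have hjj' : j = j' := huniq _ _ hi2
      subst hjj'
      rcases hsplit i with h | h
      · have := hneg _ h
        rw [hi, ← hj'] at this
        exact Lit.neg_ne_self (m j) this.symm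
      · have hin := hrest _ h
        rw [hi, ← hj'] at hin
        have hnd : (clauseOfFn m).Nodup := by
          apply Multiset.coe_nodup.mpr
          apply List.nodup_ofFn.mpr
          intro a b hab
          exact hM.1 a b hab
        exact (hnd.not_mem_erase) hin
  · rintro ⟨σ, ⟨i0, j0, hex⟩, ⟨j', huniq⟩, hcomp, hcoh⟩
    have hj0 : j0 = j' := huniq _ _ hex
    rw [hj0] at hex
    refine ⟨σ, (clauseOfFn s).filter (fun l => Lit.subst σ l = (m j').neg), m j',
      Multiset.filter_le _ _, ?_, mem_clauseOfFn.mpr ⟨j', rfl⟩, ?_, ?_⟩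
    · intro h0
      have : s i0 ∈ (clauseOfFn s).filter (fun l => Lit.subst σ l = (m j').neg) :=
        Multiset.mem_filter.mpr ⟨mem_clauseOfFn.mpr ⟨i0, rfl⟩, hex⟩
      rw [h0] at this
      exact absurd this (Multiset.notMem_zero _)
    · intro l hl
      exact (Multiset.mem_filter.mp hl).2
    · intro l hl
      have hmem : l ∈ clauseOfFn s := Multiset.mem_of_le (tsub_le_self) hl
      have hnp : ¬ (Lit.subst σ l = (m j').neg) := by
        intro hp
        have hc : Multiset.count l ((clauseOfFn s) - (clauseOfFn s).filter
            (fun l => Lit.subst σ l = (m j').neg)) = 0 := by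
          rw [Multiset.count_sub, Multiset.count_filter, if_pos hp]
          omega
        rw [← Multiset.count_pos] at hl
        omega
      obtain ⟨i, hi⟩ := mem_clauseOfFn.mp hmem
      subst hi
      obtain ⟨j, hj⟩ := hcomp i
      rcases hj with hj | hj
      · exact absurd (huniq _ _ hj ▸ hj) hnp
      · have hne : j ≠ j' := by
          intro h; subst h
          exact hcoh j ⟨i, hj⟩ i0 hex
        rw [hj]
        exact (Multiset.mem_erase_of_ne (fun h => hne (hM.1 _ _ h))).mpr
          (mem_clauseOfFn.mpr ⟨j, rfl⟩)
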